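/- arXiv:1301.3963 — 2 statements merged into one kernel-verified Lean document; each statement's English description precedes it below -/
import Mathlib

section
/- Fix p, K ∈ [1,∞) and n ∈ ℕ. Suppose (X,d_X) is a p-barycentric metric space with constant K via a barycenter map B. Then every symmetric stochastic matrix A = (a_{ij}) ∈ M_n(ℝ) with γ₊(A,d_X^p) < ∞ satisfies λ_p(A⊗I_X^n) ≤ β_p(K)·((K^{2p}γ₊(A,d_X^p) − 1)/(K^{2p}γ₊(A,d_X^p) + K^p))^{1/p}. -/
open scoped BigOperators ENNReal
open scoped Classical

noncomputable section

/-- A finitely supported probability measure on `X`. -/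
structure FinProb (X : Type*) where
  w : X →₀ ℝ
  nonneg : ∀ x, 0 ≤ w x
  total : w.sum (fun _ r => r) = 1

namespace FinProb

/-- The Dirac point mass at `x`. -/
def dirac {X : Type*} (x : X) : FinProb X where
  w := Finsupp.single x 1
  nonneg := fun y => by
    rw [Finsupp.single_apply]
    split <;> norm_num
  total := Finsupp.sum_single_index rfl

/-- The probability measure `∑ i, w i • δ_{Z i}` for nonnegative weights summing to 1. -/
def mix {ι X : Type*} [Fintype ι] (w : ι → ℝ) (Z : ι → X)
    (hw : ∀ i, 0 ≤ w i) (h1 : ∑ i, w i = 1) : FinProb X where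
  w := ∑ i, Finsupp.single (Z i) (w i)
  nonneg := fun x => by
    rw [Finset.sum_apply']
    refine Finset.sum_nonneg fun i _ => ?_
    rw [Finsupp.single_apply]
    split
    · exact hw i
    · exact le_rfl
  total := by
    rw [← Finsupp.sum_finset_sum_index (fun _ => rfl) (fun _ _ _ => rfl)]
    have h : ∀ i ∈ (Finset.univ : Finset ι),
        (Finsupp.single (Z i) (w i)).sum (fun _ r => r) = w i :=
      fun i _ => Finsupp.sum_single_index rfl
    rw [Finset.sum_congr rfl h]
    exact h1

/-- `mix` with normalization of the weights. -/
def mixN {ι X : Type*} [Fintype ι] (w : ι → ℝ) (Z : ι → X)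
    (hw : ∀ i, 0 ≤ w i) (hpos : 0 < ∑ i, w i) : FinProb X :=
  mix (fun i => w i / ∑ j, w j) Z
    (fun i => div_nonneg (hw i) hpos.le)
    (by rw [← Finset.sum_div, div_self (ne_of_gt hpos)])

/-- Integral of `f : X → ℝ` against `μ`. -/
def exp {X : Type*} (μ : FinProb X) (f : X → ℝ) : ℝ :=
  μ.w.sum fun x r => r * f x

end FinProb

/-- `π` is a coupling of `μ` and `ν`. -/
def IsCoupling {X : Type*} (π : FinProb (X × X)) (μ ν : FinProb X) : Prop :=
  (∀ x : X, (π.w.sum fun q r => if q.1 = x then r else 0) = μ.w x) ∧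
  (∀ y : X, (π.w.sum fun q r => if q.2 = y then r else 0) = ν.w y)

/-- The Wasserstein `p` distance between finitely supported probability measures. -/
def wassersteinDist {X : Type*} [MetricSpace X] (p : ℝ) (μ ν : FinProb X) : ℝ :=
  sInf {c : ℝ | ∃ π : FinProb (X × X), IsCoupling π μ ν ∧
    c = (π.exp fun q => dist q.1 q.2 ^ p) ^ p⁻¹}

/-- A barycenter map sends Dirac masses to their base points. -/
def IsBarycenterMap {X : Type*} (bary : FinProb X → X) : Prop :=
  ∀ x : X, bary (FinProb.dirac x) = x

/-- `X` is `W_p` barycentric with constant `Γ` via the barycenter map `bary`. -/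
def IsWBarycentric {X : Type*} [MetricSpace X] (p Γ : ℝ) (bary : FinProb X → X) : Prop :=
  IsBarycenterMap bary ∧
    ∀ μ ν : FinProb X, dist (bary μ) (bary ν) ≤ Γ * wassersteinDist p μ ν

/-- `X` is `p`-barycentric with constant `K` via the map `bary`. -/
def IsPBarycentric {X : Type*} [MetricSpace X] (p K : ℝ) (bary : FinProb X → X) : Prop :=
  ∀ (x : X) (μ : FinProb X),
    dist x (bary μ) ^ p + K ^ (-p) * (μ.exp fun y => dist (bary μ) y ^ p)
      ≤ μ.exp fun y => dist x y ^ p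

/-- A (possibly rectangular) matrix is stochastic if it has nonnegative entries and
each row sums to `1`. -/
def IsStochastic {n m : ℕ} (A : Matrix (Fin n) (Fin m) ℝ) : Prop :=
  (∀ i j, 0 ≤ A i j) ∧ ∀ i, ∑ j, A i j = 1

/-- `A` is reversible relative to the probability vector `π`. -/
def IsReversible {n : ℕ} (A : Matrix (Fin n) (Fin n) ℝ) (π : Fin n → ℝ) : Prop :=
  ∀ i j, π i * A i j = π j * A j i

/-- `π` is a probability vector. -/
def IsProbVec {n : ℕ} (π : Fin n → ℝ) : Prop :=
  (∀ i, 0 ≤ π i) ∧ ∑ i, π i = 1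

/-- The Cesàro average `𝒜_t(A) = (1/t) ∑_{s=1}^t A^s`. -/
def cesaro {n : ℕ} (A : Matrix (Fin n) (Fin n) ℝ) (t : ℕ) : Matrix (Fin n) (Fin n) ℝ :=
  (t : ℝ)⁻¹ • ∑ s ∈ Finset.Icc 1 t, A ^ s

/-- `X` has Markov type `p` with constant `M`. -/
def HasMarkovType (X : Type*) [MetricSpace X] (p M : ℝ) : Prop :=
  ∀ (n t : ℕ), 0 < n → 0 < t → ∀ (π : Fin n → ℝ) (A : Matrix (Fin n) (Fin n) ℝ),
    IsProbVec π → IsStochastic A → IsReversible A π → ∀ x : Fin n → X,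
      ∑ i, ∑ j, π i * (A ^ t) i j * dist (x i) (x j) ^ p ≤
        M ^ p * t * ∑ i, ∑ j, π i * A i j * dist (x i) (x j) ^ p

/-- `X` has metric Markov cotype `p` with constant `N`. -/
def HasMetricMarkovCotype (X : Type*) [MetricSpace X] (p N : ℝ) : Prop :=
  ∀ (n t : ℕ), 0 < n → 0 < t → ∀ (π : Fin n → ℝ) (A : Matrix (Fin n) (Fin n) ℝ),
    IsProbVec π → IsStochastic A → IsReversible A π → ∀ x : Fin n → X,
      ∃ y : Fin n → X,
        (∑ i, π i * dist (x i) (y i) ^ p) +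
          t * ∑ i, ∑ j, π i * A i j * dist (y i) (y j) ^ p ≤
        N ^ p * ∑ i, ∑ j, π i * cesaro A t i j * dist (x i) (x j) ^ p

/-- The Markov type `p` constant `M_p(X)`. -/
def markovTypeConst (X : Type*) [MetricSpace X] (p : ℝ) : ℝ :=
  sInf {M : ℝ | 0 < M ∧ HasMarkovType X p M}

/-- The metric Markov cotype `p` constant `N_p(X)`. -/
def markovCotypeConst (X : Type*) [MetricSpace X] (p : ℝ) : ℝ :=
  sInf {N : ℝ | 0 < N ∧ HasMetricMarkovCotype X p N}

/-- The nonlinear spectral gap quantity `γ₊(A, d_X^p)`. -/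
def gammaPlus (X : Type*) [MetricSpace X] {n : ℕ} (A : Matrix (Fin n) (Fin n) ℝ)
    (p : ℝ) : ℝ≥0∞ :=
  sInf {g : ℝ≥0∞ | ∀ x y : Fin n → X,
    ENNReal.ofReal (((n : ℝ) ^ 2)⁻¹ * ∑ i, ∑ j, dist (x i) (y j) ^ p) ≤
      (g / (n : ℝ≥0∞)) * ENNReal.ofReal (∑ i, ∑ j, A i j * dist (x i) (y j) ^ p)}

/-- The metric of `L_p^n(X)`. -/
def dLpn {X : Type*} [MetricSpace X] (p : ℝ) {n : ℕ} (f g : Fin n → X) : ℝ :=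
  ((n : ℝ)⁻¹ * ∑ i, dist (f i) (g i) ^ p) ^ p⁻¹

/-- The barycenter `B(f) = B((1/n) ∑ δ_{f(i)})` of `f : Fin n → X`. -/
def baryFun {X : Type*} [MetricSpace X] (bary : FinProb X → X) {n : ℕ} (hn : 0 < n)
    (f : Fin n → X) : X :=
  bary (FinProb.mixN (fun _ : Fin n => 1) f (fun _ => zero_le_one)
    (by
      simp only [Finset.sum_const, Finset.card_univ, Fintype.card_fin, nsmul_eq_mul, mul_one]
      exact_mod_cast hn))

/-- The nonlinear action `(A ⊗ I_X^n)(f)(i) = B(∑_j a_{ij} δ_{f(j)})`. -/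
def matAct {X : Type*} [MetricSpace X] (bary : FinProb X → X) {n : ℕ}
    (A : Matrix (Fin n) (Fin n) ℝ) (hA : IsStochastic A) (f : Fin n → X) : Fin n → X :=
  fun i => bary (FinProb.mix (fun j => A i j) f (fun j => hA.1 i j) (hA.2 i))

/-- The quantity `λ_p(T)`. -/
def lambdaP {X : Type*} [MetricSpace X] (p : ℝ) {n : ℕ} (hn : 0 < n)
    (bary : FinProb X → X) (T : (Fin n → X) → (Fin n → X)) : ℝ≥0∞ :=
  sInf {l : ℝ≥0∞ | ∀ f : Fin n → X,
    ENNReal.ofReal (dLpn p (T f) (fun _ => baryFun bary hn (T f))) ≤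
      l * ENNReal.ofReal (dLpn p f (fun _ => baryFun bary hn f))}

/-- A finite σ-algebra on a finite set `Ω`, described by its atoms. -/
structure FinPartition (Ω : Type*) [Fintype Ω] where
  atom : Ω → Finset Ω
  mem_atom : ∀ ω, ω ∈ atom ω
  atom_eq : ∀ ω ω', ω' ∈ atom ω → atom ω' = atom ω

/-- The conditional barycenter `B(Z | F)`. -/
def condBary {Ω X : Type*} [Fintype Ω] (bary : FinProb X → X)
    (μ : Ω → ℝ) (hμ : ∀ ω, 0 < μ ω) (F : FinPartition Ω) (Z : Ω → X) : Ω → X :=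
  fun ω => bary (FinProb.mixN (fun a : {a // a ∈ F.atom ω} => μ a) (fun a => Z a)
    (fun a => (hμ a).le)
    (Finset.sum_pos (fun a _ => hμ a) ⟨⟨ω, F.mem_atom ω⟩, Finset.mem_univ _⟩))


/-!
Fix `f`, write `W = B(f)`, `g = (A ⊗ I_X^n)(f)` and `k = K^p`. The barycentric inequality for the
uniform measure on `f`, taken at each point `g_j`, together with the defining inequality of `γ₊`,
gives `∑ⱼ d(g_j, W)^p + k⁻¹ ∑ᵢ d(f_i, W)^p ≤ γ₊ ∑ᵢⱼ a_ij d(f_i, g_j)^p`. The barycentric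
inequality for the rows of `A`, taken at `W`, gives (the columns of `A` sum to `1` by symmetry)
`∑ⱼ d(g_j, W)^p + k⁻¹ ∑ᵢⱼ a_ij d(f_i, g_j)^p ≤ ∑ᵢ d(f_i, W)^p`. Eliminating the mixed sum yields
`∑ⱼ d(g_j, W)^p ≤ (k²γ₊ - 1)/(k²γ₊ + k) ∑ᵢ d(f_i, W)^p`.

It remains to replace the centre `W` of `g` by its own barycenter `B(g)`, at the cost of the
factor `β_p(K)`: the barycentric inequality at `W` for the uniform measure on `g` and Minkowski's
inequality `‖g - B(g)‖ ≤ ‖g - W‖ + d(W, B(g))` are balanced exactly by `β^p + k (β - 1)^p = k`.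
If `X` is a point, `λ_p` vanishes; otherwise `γ₊ ≥ 1`, so the contraction factor is nonnegative.
-/

lemma mean_rpow_add_le {n : ℕ} (hn : 0 < n) {p : ℝ} (hp : 1 ≤ p) {x : Fin n → ℝ}
    (hx : ∀ i, 0 ≤ x i) {t : ℝ} (ht : 0 ≤ t) :
    ((n : ℝ)⁻¹ * ∑ i, (x i + t) ^ p) ^ p⁻¹ ≤ ((n : ℝ)⁻¹ * ∑ i, x i ^ p) ^ p⁻¹ + t := by
  have hp0 : 0 < p := zero_lt_one.trans_le hp
  have hn0 : (0 : ℝ) < n := by exact_mod_cast hn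
  have hminkowski := Real.Lp_add_le Finset.univ x (fun _ => t) hp
  simp only [abs_of_nonneg (add_nonneg (hx _) ht), abs_of_nonneg (hx _), abs_of_nonneg ht,
    Finset.sum_const, Finset.card_univ, Fintype.card_fin, nsmul_eq_mul, one_div] at hminkowski
  calc ((n : ℝ)⁻¹ * ∑ i, (x i + t) ^ p) ^ p⁻¹
      = (n : ℝ)⁻¹ ^ p⁻¹ * (∑ i, (x i + t) ^ p) ^ p⁻¹ := by
        rw [Real.mul_rpow (by positivity)
          (Finset.sum_nonneg fun i _ => Real.rpow_nonneg (add_nonneg (hx i) ht) p)]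
    _ ≤ (n : ℝ)⁻¹ ^ p⁻¹ * ((∑ i, x i ^ p) ^ p⁻¹ + (n * t ^ p) ^ p⁻¹) := by gcongr
    _ = ((n : ℝ)⁻¹ * ∑ i, x i ^ p) ^ p⁻¹ + t := by
        rw [mul_add, ← Real.mul_rpow (by positivity)
            (Finset.sum_nonneg fun i _ => Real.rpow_nonneg (hx i) p),
          ← Real.mul_rpow (by positivity) (by positivity), inv_mul_cancel_left₀ hn0.ne',
          Real.rpow_rpow_inv ht hp0.ne']

lemma le_rpow_mul_of_rpow_inv_le_add {p k β a b t : ℝ} (hp : 0 < p) (hk : 0 < k)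
    (hβ : 1 ≤ β) (hβeq : β ^ p + k * (β - 1) ^ p = k) (hb : 0 ≤ b)
    (h₁ : a ^ p⁻¹ ≤ b ^ p⁻¹ + t) (h₂ : t ^ p + k⁻¹ * a ≤ b) :
    a ≤ β ^ p * b := by
  -- If `a > β^p b` then `t > (β - 1) b^{1/p}`, so `t^p + a/k > (β - 1)^p b + β^p b/k = b`.
  by_contra! hlt
  have hβ0 : 0 ≤ β := zero_le_one.trans hβ
  have hroot : β * b ^ p⁻¹ < a ^ p⁻¹ := by
    have := Real.rpow_lt_rpow (by positivity) hlt (inv_pos.2 hp)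
    rwa [Real.mul_rpow (by positivity) hb, Real.rpow_rpow_inv hβ0 hp.ne'] at this
  have ht_pow : (β - 1) ^ p * b ≤ t ^ p := by
    have := Real.rpow_le_rpow (by positivity) (by linarith : (β - 1) * b ^ p⁻¹ ≤ t) hp.le
    rwa [Real.mul_rpow (by linarith) (by positivity), Real.rpow_inv_rpow hb hp.ne'] at this
  have hβk : (β - 1) ^ p + k⁻¹ * β ^ p = 1 := by
    field_simp
    linarith
  nlinarith [mul_lt_mul_of_pos_left hlt (inv_pos.2 hk)]

lemma le_div_mul_of_add_inv_mul_le {k g a b s : ℝ} (hk : 0 < k) (hg : 0 ≤ g)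
    (h₁ : a + k⁻¹ * b ≤ g * s) (h₂ : a + k⁻¹ * s ≤ b) :
    a ≤ (k * k * g - 1) / (k * k * g + k) * b := by
  have h₁' : k * a + b ≤ k * (g * s) := by
    have := mul_le_mul_of_nonneg_left h₁ hk.le
    rwa [mul_add, mul_inv_cancel_left₀ hk.ne'] at this
  have h₂' : k * a + s ≤ k * b := by
    have := mul_le_mul_of_nonneg_left h₂ hk.le
    rwa [mul_add, mul_inv_cancel_left₀ hk.ne'] at this
  rw [div_mul_eq_mul_div, le_div_iff₀ (by positivity)]
  nlinarith [mul_le_mul_of_nonneg_left h₂' (mul_nonneg hk.le hg)]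

lemma ENNReal.le_sInf_mul_of_forall_le_mul {T : Set ℝ≥0∞} {c e : ℝ≥0∞} (hT : sInf T ≠ ⊤)
    (he : e ≠ ⊤) (h : ∀ g ∈ T, c ≤ g * e) : c ≤ sInf T * e := by
  rcases eq_or_ne e 0 with rfl | he0
  · obtain ⟨g, hg⟩ := Set.nonempty_iff_ne_empty.2 fun hT' : T = ∅ => hT (by rw [hT', sInf_empty])
    simpa using h g hg
  · exact (ENNReal.div_le_iff he0 he).1 (le_sInf fun g hg => (ENNReal.div_le_iff he0 he).2 (h g hg))

lemma FinProb.exp_mix {ι X : Type*} [Fintype ι] (w : ι → ℝ) (Z : ι → X)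
    (hw : ∀ i, 0 ≤ w i) (h1 : ∑ i, w i = 1) (h : X → ℝ) :
    (FinProb.mix w Z hw h1).exp h = ∑ i, w i * h (Z i) := by
  change (∑ i, Finsupp.single (Z i) (w i)).sum (fun x r => r * h x) = _
  rw [← Finsupp.sum_finsetSum_index (fun x => zero_mul (h x)) fun x r r' => add_mul r r' (h x)]
  exact Finset.sum_congr rfl fun i _ => Finsupp.sum_single_index (zero_mul _)

lemma FinProb.exp_mixN_one {ι X : Type*} [Fintype ι] (Z : ι → X)
    (hw : ∀ _ : ι, (0 : ℝ) ≤ 1) (hpos : 0 < ∑ _ : ι, (1 : ℝ)) (h : X → ℝ) :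
    (FinProb.mixN (fun _ => 1) Z hw hpos).exp h = (Fintype.card ι : ℝ)⁻¹ * ∑ i, h (Z i) := by
  simp [FinProb.mixN, FinProb.exp_mix, Finset.mul_sum]

section GammaPlus

variable {X : Type*} [MetricSpace X] {n : ℕ} {A : Matrix (Fin n) (Fin n) ℝ} {p : ℝ}

lemma ofReal_le_gammaPlus_div_mul (hn : 0 < n) (hγ : gammaPlus X A p ≠ ⊤) (x y : Fin n → X) :
    ENNReal.ofReal (((n : ℝ) ^ 2)⁻¹ * ∑ i, ∑ j, dist (x i) (y j) ^ p) ≤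
      gammaPlus X A p / n * ENNReal.ofReal (∑ i, ∑ j, A i j * dist (x i) (y j) ^ p) := by
  have hdiv : ∀ g : ℝ≥0∞, g / n * ENNReal.ofReal (∑ i, ∑ j, A i j * dist (x i) (y j) ^ p) =
      g * (ENNReal.ofReal (∑ i, ∑ j, A i j * dist (x i) (y j) ^ p) / n) := fun g => by
    simp only [div_eq_mul_inv]
    ring
  rw [hdiv]
  refine ENNReal.le_sInf_mul_of_forall_le_mul hγ
    (ENNReal.div_ne_top ENNReal.ofReal_ne_top (by exact_mod_cast hn.ne')) fun g hg => ?_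
  rw [← hdiv]
  exact hg x y

lemma mean_sum_dist_le_toReal_gammaPlus_mul (hn : 0 < n) (hA : ∀ i j, 0 ≤ A i j)
    (hγ : gammaPlus X A p ≠ ⊤) (x y : Fin n → X) :
    (n : ℝ)⁻¹ * ∑ i, ∑ j, dist (x i) (y j) ^ p ≤
      (gammaPlus X A p).toReal * ∑ i, ∑ j, A i j * dist (x i) (y j) ^ p := by
  have hS : 0 ≤ ∑ i, ∑ j, A i j * dist (x i) (y j) ^ p :=
    Finset.sum_nonneg fun i _ => Finset.sum_nonneg fun j _ =>
      mul_nonneg (hA i j) (Real.rpow_nonneg dist_nonneg p)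
  have hn0 : (n : ℝ) ≠ 0 := by exact_mod_cast hn.ne'
  have h := (ENNReal.ofReal_le_iff_le_toReal (by finiteness)).1
    (ofReal_le_gammaPlus_div_mul hn hγ x y)
  rw [ENNReal.toReal_mul, ENNReal.toReal_div, ENNReal.toReal_natCast,
    ENNReal.toReal_ofReal hS] at h
  calc (n : ℝ)⁻¹ * ∑ i, ∑ j, dist (x i) (y j) ^ p
      = n * (((n : ℝ) ^ 2)⁻¹ * ∑ i, ∑ j, dist (x i) (y j) ^ p) := by field_simp
    _ ≤ n * ((gammaPlus X A p).toReal / n * ∑ i, ∑ j, A i j * dist (x i) (y j) ^ p) := by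
      gcongr
    _ = _ := by field_simp

lemma one_le_toReal_gammaPlus [Nontrivial X] (hn : 0 < n) (hA : IsStochastic A)
    (hγ : gammaPlus X A p ≠ ⊤) : 1 ≤ (gammaPlus X A p).toReal := by
  obtain ⟨x, y, hxy⟩ := exists_pair_ne X
  have h := mean_sum_dist_le_toReal_gammaPlus_mul hn hA.1 hγ (fun _ => x) (fun _ => y)
  simp only [← Finset.sum_mul, hA.2, one_mul, Finset.sum_const, Finset.card_univ,
    Fintype.card_fin, nsmul_eq_mul] at h
  have hd : 0 < dist x y ^ p := Real.rpow_pos_of_pos (dist_pos.2 hxy) p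
  have hn0 : (0 : ℝ) < n := by exact_mod_cast hn
  rw [mul_assoc, inv_mul_cancel_left₀ hn0.ne'] at h
  exact (le_mul_iff_one_le_left (by positivity)).1 h

end GammaPlus

section LambdaP

variable {X : Type*} [MetricSpace X] {p : ℝ} {n : ℕ}

lemma dLpn_nonneg (f g : Fin n → X) : 0 ≤ dLpn p f g := by
  unfold dLpn
  positivity

lemma dLpn_le_mul_of_le_rpow_mul (hp : 0 < p) {c : ℝ} (hc : 0 ≤ c) {f g f' g' : Fin n → X}
    (h : (n : ℝ)⁻¹ * ∑ i, dist (f i) (g i) ^ p ≤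
      c ^ p * ((n : ℝ)⁻¹ * ∑ i, dist (f' i) (g' i) ^ p)) :
    dLpn p f g ≤ c * dLpn p f' g' := by
  unfold dLpn
  calc ((n : ℝ)⁻¹ * ∑ i, dist (f i) (g i) ^ p) ^ p⁻¹
      ≤ (c ^ p * ((n : ℝ)⁻¹ * ∑ i, dist (f' i) (g' i) ^ p)) ^ p⁻¹ := by gcongr
    _ = c * ((n : ℝ)⁻¹ * ∑ i, dist (f' i) (g' i) ^ p) ^ p⁻¹ := by
      rw [Real.mul_rpow (by positivity) (by positivity), Real.rpow_rpow_inv hc hp.ne']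

lemma lambdaP_le_ofReal (hn : 0 < n) {bary : FinProb X → X} {T : (Fin n → X) → Fin n → X}
    {c : ℝ} (h : ∀ f, dLpn p (T f) (fun _ => baryFun bary hn (T f)) ≤
      c * dLpn p f (fun _ => baryFun bary hn f)) :
    lambdaP p hn bary T ≤ ENNReal.ofReal c :=
  sInf_le fun f => by
    rw [← ENNReal.ofReal_mul' (dLpn_nonneg _ _)]
    exact ENNReal.ofReal_le_ofReal (h f)

lemma lambdaP_eq_zero [Subsingleton X] (hp : p ≠ 0) (hn : 0 < n) (bary : FinProb X → X)
    (T : (Fin n → X) → Fin n → X) : lambdaP p hn bary T = 0 :=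
  nonpos_iff_eq_zero.1 <| sInf_le fun f => by
    simp [dLpn, Subsingleton.elim (T f _) (baryFun bary hn (T f)), Real.zero_rpow hp,
      Real.zero_rpow (inv_ne_zero hp)]

end LambdaP

namespace IsPBarycentric

variable {X : Type*} [MetricSpace X] {p K : ℝ} {bary : FinProb X → X} {n : ℕ}

lemma dist_mix_add_le (hP : IsPBarycentric p K bary) (hK : 0 ≤ K) {ι : Type*} [Fintype ι]
    (x : X) (w : ι → ℝ) (Z : ι → X) (hw : ∀ i, 0 ≤ w i) (h1 : ∑ i, w i = 1) :
    dist x (bary (FinProb.mix w Z hw h1)) ^ p +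
        (K ^ p)⁻¹ * ∑ i, w i * dist (bary (FinProb.mix w Z hw h1)) (Z i) ^ p ≤
      ∑ i, w i * dist x (Z i) ^ p := by
  simpa only [FinProb.exp_mix, Real.rpow_neg hK] using hP x (FinProb.mix w Z hw h1)

lemma dist_baryFun_add_le (hP : IsPBarycentric p K bary) (hK : 0 ≤ K) (hn : 0 < n)
    (x : X) (f : Fin n → X) :
    dist x (baryFun bary hn f) ^ p +
        (K ^ p)⁻¹ * ((n : ℝ)⁻¹ * ∑ i, dist (baryFun bary hn f) (f i) ^ p) ≤
      (n : ℝ)⁻¹ * ∑ i, dist x (f i) ^ p := by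
  have h := hP x (FinProb.mixN (fun _ : Fin n => (1 : ℝ)) f (fun _ => zero_le_one)
    (by simpa using hn))
  rwa [FinProb.exp_mixN_one, FinProb.exp_mixN_one, Fintype.card_fin, Real.rpow_neg hK] at h

lemma sum_dist_baryFun_add_le (hP : IsPBarycentric p K bary) (hK : 0 ≤ K) (hn : 0 < n)
    (f g : Fin n → X) :
    ∑ j, dist (g j) (baryFun bary hn f) ^ p +
        (K ^ p)⁻¹ * ∑ i, dist (f i) (baryFun bary hn f) ^ p ≤
      (n : ℝ)⁻¹ * ∑ i, ∑ j, dist (f i) (g j) ^ p := by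
  have hsum := Finset.sum_le_sum fun j (_ : j ∈ Finset.univ) =>
    hP.dist_baryFun_add_le hK hn (g j) f
  have hn0 : (n : ℝ) ≠ 0 := by exact_mod_cast hn.ne'
  simp only [Finset.sum_add_distrib, Finset.sum_const, Finset.card_univ, Fintype.card_fin,
    nsmul_eq_mul, ← Finset.mul_sum] at hsum
  rw [Finset.sum_comm] at hsum
  simp only [dist_comm (g _) (f _), dist_comm (baryFun bary hn f) (f _)] at hsum
  calc _ = ∑ j, dist (g j) (baryFun bary hn f) ^ p +
        n * ((K ^ p)⁻¹ * ((n : ℝ)⁻¹ * ∑ i, dist (f i) (baryFun bary hn f) ^ p)) := by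
          field_simp
    _ ≤ _ := hsum

lemma sum_dist_matAct_add_le (hP : IsPBarycentric p K bary) (hK : 0 ≤ K)
    {A : Matrix (Fin n) (Fin n) ℝ} (hA : IsStochastic A) (hsymm : A.IsSymm)
    (f : Fin n → X) (x : X) :
    ∑ i, dist (matAct bary A hA f i) x ^ p +
        (K ^ p)⁻¹ * ∑ i, ∑ j, A i j * dist (f i) (matAct bary A hA f j) ^ p ≤
      ∑ i, dist (f i) x ^ p := by
  have hsum : ∑ i, (dist x (matAct bary A hA f i) ^ p +
      (K ^ p)⁻¹ * ∑ j, A i j * dist (matAct bary A hA f i) (f j) ^ p) ≤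
        ∑ i, ∑ j, A i j * dist x (f j) ^ p :=
    Finset.sum_le_sum fun i _ => hP.dist_mix_add_le hK x (fun j => A i j) f (hA.1 i) (hA.2 i)
  have hswap : ∑ i, ∑ j, A i j * dist (matAct bary A hA f i) (f j) ^ p =
      ∑ i, ∑ j, A i j * dist (f i) (matAct bary A hA f j) ^ p := by
    rw [Finset.sum_comm]
    simp only [hsymm.apply, dist_comm (matAct bary A hA f _) (f _)]
  have hcol : ∑ i, ∑ j, A i j * dist x (f j) ^ p = ∑ j, dist (f j) x ^ p := by
    rw [Finset.sum_comm]
    refine Finset.sum_congr rfl fun j _ => ?_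
    rw [← Finset.sum_mul, Finset.sum_congr rfl fun i _ => hsymm.apply j i, hA.2 j, one_mul,
      dist_comm]
  rw [Finset.sum_add_distrib, ← Finset.mul_sum, hcol] at hsum
  simpa only [dist_comm x, ← hswap] using hsum

lemma mean_dist_baryFun_le (hP : IsPBarycentric p K bary) (hp : 1 ≤ p) (hK : 0 < K) {β : ℝ}
    (hβ : 1 ≤ β) (hβeq : β ^ p + K ^ p * (β - 1) ^ p = K ^ p) (hn : 0 < n)
    (g : Fin n → X) (w : X) :
    (n : ℝ)⁻¹ * ∑ j, dist (g j) (baryFun bary hn g) ^ p ≤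
      β ^ p * ((n : ℝ)⁻¹ * ∑ j, dist (g j) w ^ p) := by
  have hp0 : 0 < p := zero_lt_one.trans_le hp
  have hbary := hP.dist_baryFun_add_le hK.le hn w g
  simp only [dist_comm (baryFun bary hn g) (g _), dist_comm w (g _)] at hbary
  have hminkowski : ((n : ℝ)⁻¹ * ∑ j, dist (g j) (baryFun bary hn g) ^ p) ^ p⁻¹ ≤
      ((n : ℝ)⁻¹ * ∑ j, dist (g j) w ^ p) ^ p⁻¹ + dist w (baryFun bary hn g) := by
    refine le_trans ?_ (mean_rpow_add_le hn hp (fun _ => dist_nonneg) dist_nonneg)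
    gcongr
    exact dist_triangle _ _ _
  exact le_rpow_mul_of_rpow_inv_le_add hp0 (Real.rpow_pos_of_pos hK p) hβ hβeq
    (by positivity) hminkowski hbary

lemma sum_dist_matAct_baryFun_le (hP : IsPBarycentric p K bary) (hK : 0 < K) (hn : 0 < n)
    {A : Matrix (Fin n) (Fin n) ℝ} (hA : IsStochastic A) (hsymm : A.IsSymm)
    (hγ : gammaPlus X A p ≠ ⊤) (f : Fin n → X) :
    ∑ i, dist (matAct bary A hA f i) (baryFun bary hn f) ^ p ≤
      (K ^ p * K ^ p * (gammaPlus X A p).toReal - 1) /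
          (K ^ p * K ^ p * (gammaPlus X A p).toReal + K ^ p) *
        ∑ i, dist (f i) (baryFun bary hn f) ^ p :=
  le_div_mul_of_add_inv_mul_le (Real.rpow_pos_of_pos hK p) ENNReal.toReal_nonneg
    ((hP.sum_dist_baryFun_add_le hK.le hn f _).trans
      (mean_sum_dist_le_toReal_gammaPlus_mul hn hA.1 hγ f _))
    (hP.sum_dist_matAct_add_le hK.le hA hsymm f _)

lemma dLpn_matAct_baryFun_le (hP : IsPBarycentric p K bary) (hp : 1 ≤ p) (hK : 1 ≤ K)
    (hn : 0 < n) {A : Matrix (Fin n) (Fin n) ℝ} (hA : IsStochastic A) (hsymm : A.IsSymm)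
    (hγ : gammaPlus X A p ≠ ⊤) (hγ₁ : 1 ≤ (gammaPlus X A p).toReal) {β : ℝ} (hβ : 1 ≤ β)
    (hβeq : β ^ p + K ^ p * (β - 1) ^ p = K ^ p) (f : Fin n → X) :
    dLpn p (matAct bary A hA f) (fun _ => baryFun bary hn (matAct bary A hA f)) ≤
      β * ((K ^ (2 * p) * (gammaPlus X A p).toReal - 1) /
          (K ^ (2 * p) * (gammaPlus X A p).toReal + K ^ p)) ^ p⁻¹ *
        dLpn p f (fun _ => baryFun bary hn f) := by
  have hp0 : 0 < p := zero_lt_one.trans_le hp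
  have hK0 : 0 < K := zero_lt_one.trans_le hK
  have hKp : 1 ≤ K ^ p := Real.one_le_rpow hK hp0.le
  rw [two_mul, Real.rpow_add hK0]
  have hR : 0 ≤ (K ^ p * K ^ p * (gammaPlus X A p).toReal - 1) /
      (K ^ p * K ^ p * (gammaPlus X A p).toReal + K ^ p) := by
    have : 1 ≤ K ^ p * K ^ p * (gammaPlus X A p).toReal := one_le_mul_of_one_le_of_one_le
      (one_le_mul_of_one_le_of_one_le hKp hKp) hγ₁
    exact div_nonneg (by linarith) (by positivity)
  refine dLpn_le_mul_of_le_rpow_mul hp0 (by positivity) ?_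
  rw [Real.mul_rpow (by positivity) (by positivity), Real.rpow_inv_rpow hR hp0.ne', mul_assoc]
  refine (hP.mean_dist_baryFun_le hp hK0 hβ hβeq hn _ (baryFun bary hn f)).trans
    (mul_le_mul_of_nonneg_left ?_ (by positivity))
  rw [mul_left_comm]
  exact mul_le_mul_of_nonneg_left (hP.sum_dist_matAct_baryFun_le hK0 hn hA hsymm hγ f)
    (by positivity)

end IsPBarycentric

theorem statement11_general (p K : ℝ) (hp : 1 ≤ p) (hK : 1 ≤ K) (n : ℕ) (hn : 0 < n)
    (X : Type*) [MetricSpace X] (bary : FinProb X → X)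
    (hP : IsPBarycentric p K bary)
    (A : Matrix (Fin n) (Fin n) ℝ) (hA : IsStochastic A) (hsymm : A.IsSymm)
    (hγ : gammaPlus X A p ≠ ⊤)
    (β : ℝ) (hβ : 1 ≤ β) (hβeq : β ^ p + K ^ p * (β - 1) ^ p = K ^ p) :
    lambdaP p hn bary (matAct bary A hA) ≤
      ENNReal.ofReal (β * ((K ^ (2 * p) * (gammaPlus X A p).toReal - 1) /
        (K ^ (2 * p) * (gammaPlus X A p).toReal + K ^ p)) ^ p⁻¹) := by
  rcases subsingleton_or_nontrivial X with _ | _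
  · rw [lambdaP_eq_zero (by linarith) hn]
    positivity
  · exact lambdaP_le_ofReal hn fun f => hP.dLpn_matAct_baryFun_le hp hK hn hA hsymm hγ
      (one_le_toReal_gammaPlus hn hA hγ) hβ hβeq f

theorem statement11 (p K : ℝ) (hp : 1 ≤ p) (hK : 1 ≤ K) (n : ℕ) (hn : 0 < n)
    (X : Type*) [MetricSpace X] (bary : FinProb X → X)
    (hBary : IsBarycenterMap bary) (hP : IsPBarycentric p K bary)
    (A : Matrix (Fin n) (Fin n) ℝ) (hA : IsStochastic A) (hsymm : A.IsSymm)
    (hγ : gammaPlus X A p ≠ ⊤)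
    (β : ℝ) (hβ : 1 ≤ β) (hβeq : β ^ p + K ^ p * (β - 1) ^ p = K ^ p) :
    lambdaP p hn bary (matAct bary A hA) ≤
      ENNReal.ofReal (β * ((K ^ (2 * p) * (gammaPlus X A p).toReal - 1) /
        (K ^ (2 * p) * (gammaPlus X A p).toReal + K ^ p)) ^ p⁻¹) :=
  statement11_general p K hp hK n hn X bary hP A hA hsymm hγ β hβ hβeq

end
end

section
/- Fix p, K ∈ [1,∞). Suppose (X,d_X) is a p-barycentric metric space with constant K via a barycenter map B. Then for every n,t ∈ ℕ, every symmetric stochastic matrix A = (a_{ij}) ∈ M_n(ℝ) and every f ∈ L_p^n(X): d_{L_p^n(X)}(f, (A⊗I_X^n)^{[t]}(f))^p ≤ (1/n) Σ_{i,j} (A^t)_{ij} d_X(f(i),f(j))^p, where (A⊗I_X^n)^{[t]} denotes the t-fold iterate of A⊗I_X^n. -/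
open scoped BigOperators ENNReal
open scoped Classical

noncomputable section

/-! Dropping the variance term of `p`-barycentricity leaves `d(x, B μ)^p ≤ ∫ d(x, y)^p dμ(y)`
for every `x`. For `T = A ⊗ I_X^n` this gives, for every nonnegative weight vector `w`,
`∑_j w_j d(x, (T g)_j)^p ≤ ∑_j (w A)_j d(x, g_j)^p`, and iterating pushes `w` forward
to `w A^t`.
Taking `x = f i`, `w = e_i` and averaging over `i` yields the claim. -/

namespace FinProb

lemma exp_mix_s12 {ι X : Type*} [Fintype ι] (w : ι → ℝ) (Z : ι → X)
    (hw : ∀ i, 0 ≤ w i) (h1 : ∑ i, w i = 1) (g : X → ℝ) :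
    (mix w Z hw h1).exp g = ∑ i, w i * g (Z i) :=
  (Finsupp.sum_finsetSum_index (fun a => zero_mul (g a)) fun a _ _ => add_mul _ _ (g a)).symm.trans
    (Finset.sum_congr rfl fun _ _ => Finsupp.sum_single_index (zero_mul _))

lemma exp_nonneg {X : Type*} (μ : FinProb X) {g : X → ℝ} (hg : ∀ x, 0 ≤ g x) :
    0 ≤ μ.exp g :=
  Finsupp.sum_nonneg' fun x => mul_nonneg (μ.nonneg x) (hg x)

end FinProb

lemma dLpn_rpow {X : Type*} [MetricSpace X] {p : ℝ} (hp : p ≠ 0) {n : ℕ} (f g : Fin n → X) :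
    dLpn p f g ^ p = (n : ℝ)⁻¹ * ∑ i, dist (f i) (g i) ^ p :=
  Real.rpow_inv_rpow (by positivity) hp

open scoped Matrix

namespace IsPBarycentric

variable {X : Type*} [MetricSpace X] {p K : ℝ} {bary : FinProb X → X}

lemma rpow_dist_le (hP : IsPBarycentric p K bary) (hK : 0 ≤ K) (x : X) (μ : FinProb X) :
    dist x (bary μ) ^ p ≤ μ.exp fun y => dist x y ^ p := by
  have hvar : 0 ≤ K ^ (-p) * μ.exp fun y => dist (bary μ) y ^ p :=
    mul_nonneg (Real.rpow_nonneg hK _) (μ.exp_nonneg fun _ => Real.rpow_nonneg dist_nonneg _)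
  linarith [hP x μ]

variable {n : ℕ} {A : Matrix (Fin n) (Fin n) ℝ}

lemma rpow_dist_matAct_le (hP : IsPBarycentric p K bary) (hK : 0 ≤ K) (hA : IsStochastic A)
    (g : Fin n → X) (x : X) (j : Fin n) :
    dist x (matAct bary A hA g j) ^ p ≤ ∑ k, A j k * dist x (g k) ^ p := by
  simpa only [matAct, FinProb.exp_mix_s12] using
    hP.rpow_dist_le hK x (FinProb.mix (A j) g (hA.1 j) (hA.2 j))

lemma sum_mul_rpow_dist_iterate_matAct_le (hP : IsPBarycentric p K bary) (hK : 0 ≤ K)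
    (hA : IsStochastic A) (f : Fin n → X) (x : X) (t : ℕ) {w : Fin n → ℝ} (hw : 0 ≤ w) :
    ∑ j, w j * dist x ((matAct bary A hA)^[t] f j) ^ p ≤
      ∑ j, (w ᵥ* A ^ t) j * dist x (f j) ^ p := by
  induction t generalizing w with
  | zero => simp
  | succ t ih =>
    have hwA : 0 ≤ w ᵥ* A :=
      fun k => (Finset.sum_nonneg fun j _ => mul_nonneg (hw j) (hA.1 j k) :
        0 ≤ ∑ j, w j * A j k)
    calc ∑ j, w j * dist x ((matAct bary A hA)^[t + 1] f j) ^ p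
        ≤ ∑ j, w j * ∑ k, A j k * dist x ((matAct bary A hA)^[t] f k) ^ p := by
          rw [Function.iterate_succ_apply']
          gcongr with j
          exacts [hw j, hP.rpow_dist_matAct_le hK hA _ x j]
      _ = ∑ k, (w ᵥ* A) k * dist x ((matAct bary A hA)^[t] f k) ^ p := by
          simp only [Matrix.vecMul, dotProduct, Finset.mul_sum, Finset.sum_mul, mul_assoc]
          exact Finset.sum_comm
      _ ≤ ∑ j, (w ᵥ* A ^ (t + 1)) j * dist x (f j) ^ p := by
          rw [pow_succ', ← Matrix.vecMul_vecMul]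
          exact ih hwA

lemma rpow_dist_iterate_matAct_le (hP : IsPBarycentric p K bary) (hK : 0 ≤ K)
    (hA : IsStochastic A) (f : Fin n → X) (t : ℕ) (i : Fin n) :
    dist (f i) ((matAct bary A hA)^[t] f i) ^ p ≤ ∑ j, (A ^ t) i j * dist (f i) (f j) ^ p := by
  simpa [Matrix.single_one_vecMul, Pi.single_apply] using
    hP.sum_mul_rpow_dist_iterate_matAct_le hK hA f (f i) t (w := Pi.single i 1)
      (Pi.single_nonneg.2 zero_le_one)

end IsPBarycentric

theorem statement12_general (p K : ℝ) (hp : 1 ≤ p) (hK : 1 ≤ K)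
    (X : Type*) [MetricSpace X] (bary : FinProb X → X)
    (hP : IsPBarycentric p K bary)
    (n t : ℕ)
    (A : Matrix (Fin n) (Fin n) ℝ) (hA : IsStochastic A)
    (f : Fin n → X) :
    dLpn p f ((matAct bary A hA)^[t] f) ^ p ≤
      (n : ℝ)⁻¹ * ∑ i, ∑ j, (A ^ t) i j * dist (f i) (f j) ^ p := by
  rw [dLpn_rpow (by linarith)]
  gcongr with i
  exact hP.rpow_dist_iterate_matAct_le (by linarith) hA f t i

theorem statement12 (p K : ℝ) (hp : 1 ≤ p) (hK : 1 ≤ K)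
    (X : Type*) [MetricSpace X] (bary : FinProb X → X)
    (hBary : IsBarycenterMap bary) (hP : IsPBarycentric p K bary)
    (n t : ℕ) (hn : 0 < n) (ht : 0 < t)
    (A : Matrix (Fin n) (Fin n) ℝ) (hA : IsStochastic A) (hsymm : A.IsSymm)
    (f : Fin n → X) :
    dLpn p f ((matAct bary A hA)^[t] f) ^ p ≤
      (n : ℝ)⁻¹ * ∑ i, ∑ j, (A ^ t) i j * dist (f i) (f j) ^ p :=
  statement12_general p K hp hK X bary hP n t A hA f

end
end
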